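/- arXiv:1702.05264 — 4 statements merged into one kernel-verified Lean document; each statement's English description precedes it below -/
import Mathlib

section
/- Let G be a finite connected simple graph on V ≥ 2 vertices with edge connectivity η. Then the spectral gap of the Laplacian matrix satisfies γ_1(G) ≥ 2η(1 − cos(π/V)). -/
open scoped Classical
open Real Finset

/-- The eigenvalues of a Hermitian matrix, listed with multiplicity in increasing order. -/
noncomputable def sortedEigenvalues {n : ℕ} (A : Matrix (Fin n) (Fin n) ℝ) : Fin n → ℝ :=
  if h : A.IsHermitian then h.eigenvalues ∘ ⇑(Tuple.sort h.eigenvalues) else fun _ => 0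

/-- The edge connectivity of a graph: the smallest number of edges whose deletion
disconnects the graph. -/
noncomputable def edgeConnectivity {V : Type*} [Fintype V] (G : SimpleGraph V) : ℕ :=
  sInf {k | ∃ s : Finset (Sym2 V), ↑s ⊆ G.edgeSet ∧ s.card = k ∧
    ¬ (G.deleteEdges ↑s).Connected}

/-!
Fiedler's argument. By the min-max principle it suffices to show `x ⬝ L x ≥ c ‖x‖²` for `x ⊥ 𝟙`.
Relabel the vertices so that `x` is increasing along the path `0, …, V - 1`. An edge between ranks
`p < q` contributes `(x_q - x_p)² ≥ ∑_{p ≤ k < q} (x_{k+1} - x_k)²`, and every gap `k` is crossed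
by at least `η` edges, because these edges separate the `k + 1` lowest ranks from the others.
Hence `x ⬝ L x ≥ η ∑_k (x_{k+1} - x_k)²`, and the discrete Wirtinger inequality
`∑_k (x_{k+1} - x_k)² ≥ 2 (1 - cos (π / V)) ‖x‖²` for `∑ x = 0` finishes the proof.

Behind Wirtinger: every eigenvector of the path Laplacian with eigenvalue `2 - 2 cos t`,
`0 ≤ t < π / V`, is constant: it solves a second order recurrence, so it is a multiple of
`cos ((2k + 1) t / 2)`, and the boundary condition at the right end forces
`sin (V t) sin (t / 2) = 0`, i.e. `t = 0`.
-/

open Matrix SimpleGraph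

section Spectral

variable {ι : Type*} [Fintype ι] [DecidableEq ι] {A : Matrix ι ι ℝ} (hA : A.IsHermitian)

lemma sum_eigenvectorBasis_dotProduct_mul (x y : ι → ℝ) :
    ∑ i, (⇑(hA.eigenvectorBasis i) ⬝ᵥ x) * (⇑(hA.eigenvectorBasis i) ⬝ᵥ y) = x ⬝ᵥ y := by
  have := hA.eigenvectorBasis.sum_inner_mul_inner (WithLp.toLp 2 x) (WithLp.toLp 2 y)
  simpa [EuclideanSpace.inner_eq_star_dotProduct, dotProduct_comm] using this

lemma eigenvectorBasis_dotProduct_eigenvectorBasis (i j : ι) :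
    ⇑(hA.eigenvectorBasis i) ⬝ᵥ ⇑(hA.eigenvectorBasis j) = if i = j then 1 else 0 := by
  simpa [EuclideanSpace.inner_eq_star_dotProduct, dotProduct_comm] using
    orthonormal_iff_ite.1 hA.eigenvectorBasis.orthonormal i j

lemma eigenvectorBasis_dotProduct_mulVec (i : ι) (x : ι → ℝ) :
    ⇑(hA.eigenvectorBasis i) ⬝ᵥ (A *ᵥ x) = hA.eigenvalues i * (⇑(hA.eigenvectorBasis i) ⬝ᵥ x) := by
  have hAt : Aᵀ = A := by simpa [conjTranspose_eq_transpose_of_trivial] using hA.eq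
  rw [dotProduct_mulVec, ← mulVec_transpose, hAt, hA.mulVec_eigenvectorBasis, smul_dotProduct,
    smul_eq_mul]

lemma le_dotProduct_mulVec_of_eigenvalues_lt {c : ℝ} (x : ι → ℝ)
    (h : ∀ i, hA.eigenvalues i < c → ⇑(hA.eigenvectorBasis i) ⬝ᵥ x = 0) :
    c * (x ⬝ᵥ x) ≤ x ⬝ᵥ (A *ᵥ x) := by
  rw [← sum_eigenvectorBasis_dotProduct_mul hA x x, ← sum_eigenvectorBasis_dotProduct_mul hA,
    mul_sum]
  refine sum_le_sum fun i _ => ?_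
  rw [eigenvectorBasis_dotProduct_mulVec]
  by_cases hi : hA.eigenvalues i < c
  · simp [h i hi]
  · nlinarith [mul_self_nonneg (⇑(hA.eigenvectorBasis i) ⬝ᵥ x)]

end Spectral

lemma le_sortedEigenvalues_one {n : ℕ} (hn : 1 < n) {A : Matrix (Fin n) (Fin n) ℝ}
    (hA : A.IsHermitian) (u : Fin n → ℝ) (c : ℝ)
    (h : ∀ x, u ⬝ᵥ x = 0 → c * (x ⬝ᵥ x) ≤ x ⬝ᵥ (A *ᵥ x)) :
    c ≤ sortedEigenvalues A ⟨1, hn⟩ := by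
  rw [sortedEigenvalues, dif_pos hA, Function.comp_apply]
  set τ := Tuple.sort hA.eigenvalues
  let e := hA.eigenvectorBasis
  set i := τ ⟨0, by omega⟩
  set j := τ ⟨1, hn⟩
  have hij : i ≠ j := fun h => by simpa using τ.injective h
  have hle : hA.eigenvalues i ≤ hA.eigenvalues j :=
    Tuple.monotone_sort hA.eigenvalues (show (⟨0, by omega⟩ : Fin n) ≤ ⟨1, hn⟩ by simp)
  obtain ⟨α, β, hαβ, hu⟩ : ∃ α β : ℝ, (α ≠ 0 ∨ β ≠ 0) ∧
      α * (u ⬝ᵥ ⇑(e i)) + β * (u ⬝ᵥ ⇑(e j)) = 0 := by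
    by_cases hj : u ⬝ᵥ ⇑(e j) = 0
    · exact ⟨0, 1, by simp, by simp [hj]⟩
    · exact ⟨u ⬝ᵥ ⇑(e j), -(u ⬝ᵥ ⇑(e i)), .inl hj, by ring⟩
  set x := α • ⇑(e i) + β • ⇑(e j)
  have hdot (v : Fin n → ℝ) : x ⬝ᵥ v = α * (⇑(e i) ⬝ᵥ v) + β * (⇑(e j) ⬝ᵥ v) := by
    simp [x, add_dotProduct]
  have hxi : ⇑(e i) ⬝ᵥ x = α := by
    simp [x, e, eigenvectorBasis_dotProduct_eigenvectorBasis, hij]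
  have hxj : ⇑(e j) ⬝ᵥ x = β := by
    simp [x, e, eigenvectorBasis_dotProduct_eigenvectorBasis, hij.symm]
  have hux : u ⬝ᵥ x = 0 := by simpa [x, dotProduct_add] using hu
  have key := h x hux
  rw [hdot, hdot, hxi, hxj, eigenvectorBasis_dotProduct_mulVec, eigenvectorBasis_dotProduct_mulVec,
    hxi, hxj] at key
  have hpos : 0 < α ^ 2 + β ^ 2 := by
    rcases hαβ with h | h <;> positivity
  nlinarith [mul_le_mul_of_nonneg_left hle (sq_nonneg α)]

/-- At `k = 0` the truncated subtraction `0 - 1 = 0` sets the ghost value `u (-1)` to `u 0`: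
a reflecting (Neumann) boundary condition. -/
def neumannLaplacian (u : ℕ → ℝ) (k : ℕ) : ℝ := 2 * u k - u (k - 1) - u (k + 1)

lemma neumannLaplacian_cos (t : ℝ) (k : ℕ) :
    neumannLaplacian (fun j => cos ((2 * j + 1) * (t / 2))) k =
      (2 - 2 * cos t) * cos ((2 * k + 1) * (t / 2)) := by
  unfold neumannLaplacian
  cases k with
  | zero =>
    have h := cos_add_cos (3 * (t / 2)) (-(t / 2))
    rw [cos_neg] at h
    simp only [Nat.zero_sub, Nat.cast_zero, zero_add, Nat.cast_one]
    ring_nf at h ⊢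
    linarith
  | succ k =>
    have h := cos_add_cos ((2 * k + 5) * (t / 2)) ((2 * k + 1) * (t / 2))
    simp only [Nat.add_sub_cancel, Nat.cast_add, Nat.cast_one]
    ring_nf at h ⊢
    linarith

lemma eq_zero_of_neumannLaplacian_eq_mul {u : ℕ → ℝ} {μ : ℝ} {N : ℕ}
    (hu : ∀ k < N, neumannLaplacian u k = μ * u k) (h0 : u 0 = 0) : ∀ k ≤ N, u k = 0 := by
  intro k
  induction k using Nat.twoStepInduction with
  | zero => exact fun _ => h0
  | one =>
    intro hN
    have := hu 0 hN
    simp only [neumannLaplacian, Nat.zero_sub, h0, zero_add] at this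
    linarith
  | more k ih ih' =>
    intro hN
    have := hu (k + 1) (by omega)
    simp only [neumannLaplacian, Nat.add_sub_cancel, ih (by omega), ih' (by omega)] at this
    linarith

lemma neumannLaplacian_eigen_eq_cos {u : ℕ → ℝ} {t : ℝ} {N : ℕ}
    (hu : ∀ k < N, neumannLaplacian u k = (2 - 2 * cos t) * u k) :
    ∀ k ≤ N, u k * cos (t / 2) = u 0 * cos ((2 * k + 1) * (t / 2)) := by
  set φ : ℕ → ℝ := fun j => cos ((2 * j + 1) * (t / 2))
  have hz := eq_zero_of_neumannLaplacian_eq_mul (u := fun k => u k * φ 0 - u 0 * φ k)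
    (μ := 2 - 2 * cos t) (N := N) (fun k hk => ?_) (by ring)
  · intro k hk
    simpa [φ, sub_eq_zero] using hz k hk
  · have hφ := neumannLaplacian_cos t k
    have huk := hu k hk
    simp only [neumannLaplacian] at hφ huk ⊢
    linear_combination φ 0 * huk - u 0 * hφ

lemma neumannLaplacian_eigen_const {u : ℕ → ℝ} {μ : ℝ} {n : ℕ} (hμ₀ : 0 ≤ μ)
    (hμ : μ < 2 * (1 - cos (π / n))) (hu : ∀ k < n, neumannLaplacian u k = μ * u k)
    (hn : u n = u (n - 1)) : ∀ k < n, u k = u 0 := by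
  intro k hk
  have hnpos : (0 : ℝ) < n := by exact_mod_cast k.zero_le.trans_lt hk
  have hπn : π / n ≤ π := div_le_self pi_pos.le (by exact_mod_cast Nat.one_le_of_lt hk)
  set t := arccos (1 - μ / 2)
  have hcos : cos t = 1 - μ / 2 :=
    cos_arccos (by linarith [neg_one_le_cos (π / n)]) (by linarith)
  have ht₀ : 0 ≤ t := arccos_nonneg _
  have htn : t < π / n := by
    by_contra! h
    have := cos_le_cos_of_nonneg_of_le_pi (by positivity) (arccos_le_pi _) h
    linarith
  have hsol := neumannLaplacian_eigen_eq_cos (N := n) (t := t)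
    (fun k hk => by rw [hcos, hu k hk]; ring)
  have hcos₀ : 0 < cos (t / 2) := cos_pos_of_mem_Ioo ⟨by linarith [pi_pos], by linarith⟩
  have hboundary : u 0 * (sin (n * t) * sin (t / 2)) = 0 := by
    have h₁ := hsol n le_rfl
    have h₂ := hsol (n - 1) (Nat.sub_le n 1)
    have htrig := cos_sub_cos ((2 * n + 1) * (t / 2)) ((2 * (n - 1 : ℕ) + 1) * (t / 2))
    rw [hn] at h₁
    rw [Nat.cast_sub (Nat.one_le_of_lt hk)] at h₂ htrig
    ring_nf at htrig h₁ h₂ ⊢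
    linear_combination (1 / 2 : ℝ) * u 0 * htrig + h₁ / 2 - h₂ / 2
  rcases ht₀.eq_or_lt with ht | ht
  · simpa [← ht] using hsol k hk.le
  · have hsin : 0 < sin (n * t) * sin (t / 2) := mul_pos
      (sin_pos_of_pos_of_lt_pi (by positivity) (by rwa [lt_div_iff₀' hnpos] at htn))
      (sin_pos_of_pos_of_lt_pi (by linarith) (by linarith))
    have hu₀ : u 0 = 0 := by simpa [hsin.ne'] using hboundary
    simpa [hu₀, hcos₀.ne'] using hsol k hk.le

lemma lapMatrix_mulVec_apply_eq_sum {V : Type*} [Fintype V] [DecidableEq V] (G : SimpleGraph V)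
    [DecidableRel G.Adj] (x : V → ℝ) (i : V) :
    (G.lapMatrix ℝ *ᵥ x) i = ∑ j, if G.Adj i j then x i - x j else 0 := by
  simp only [lapMatrix_mulVec_apply, ← card_neighborFinset_eq_degree, neighborFinset_eq_filter,
    card_filter, sum_filter, Nat.cast_sum, Nat.cast_ite, sum_mul, ← sum_sub_distrib]
  congr! 1 with j
  split_ifs <;> simp

section Path

variable {m : ℕ}

def extendClamp (y : Fin (m + 1) → ℝ) (k : ℕ) : ℝ := y (Fin.clamp k m)

@[simp]
lemma extendClamp_val (y : Fin (m + 1) → ℝ) (i : Fin (m + 1)) : extendClamp y i = y i :=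
  congrArg y (Fin.ext (min_eq_left (Fin.is_le i)))

lemma extendClamp_succ (y : Fin (m + 1) → ℝ) {k : ℕ} (hk : m ≤ k) :
    extendClamp y (k + 1) = extendClamp y k :=
  congrArg y (Fin.ext (by simp [Fin.clamp]; omega))

lemma extendClamp_monotone {y : Fin (m + 1) → ℝ} (hy : Monotone y) : Monotone (extendClamp y) :=
  fun _ _ h => hy (Fin.mk_le_mk.2 (min_le_min_right m h))

lemma sum_pathGraph_adj (i : Fin (m + 1)) (g : ℕ → ℝ) :
    ∑ j, (if (pathGraph (m + 1)).Adj i j then g j else 0) =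
      (if (i : ℕ) < m then g (i + 1) else 0) + (if 0 < (i : ℕ) then g (i - 1) else 0) := by
  have hsplit (j : ℕ) : (if (i : ℕ) + 1 = j ∨ j + 1 = i then g j else 0) =
      (if (i : ℕ) + 1 = j then g j else 0) +
        (if (i : ℕ) - 1 = j then if 0 < (i : ℕ) then g j else 0 else 0) := by
    split_ifs <;> first | (exfalso; omega) | simp
  simp only [pathGraph_adj]
  rw [Fin.sum_univ_eq_sum_range (fun j => if (i : ℕ) + 1 = j ∨ j + 1 = i then g j else 0),
    sum_congr rfl fun j _ => hsplit j, sum_add_distrib, sum_ite_eq, sum_ite_eq]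
  simp only [mem_range, add_lt_add_iff_right, show (i : ℕ) - 1 < m + 1 by omega, if_true]

lemma pathGraph_lapMatrix_mulVec_apply (y : Fin (m + 1) → ℝ) (i : Fin (m + 1)) :
    ((pathGraph (m + 1)).lapMatrix ℝ *ᵥ y) i = neumannLaplacian (extendClamp y) i := by
  simp only [lapMatrix_mulVec_apply_eq_sum, ← extendClamp_val y]
  rw [sum_pathGraph_adj i fun j => extendClamp y i - extendClamp y j, neumannLaplacian]
  split_ifs with hm h0
  · ring
  · rw [show (i : ℕ) = 0 by omega]; ring
  · rw [extendClamp_succ y (by omega)]; ring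
  · rw [extendClamp_succ y (by omega), show (i : ℕ) = 0 by omega]; ring

lemma pathGraph_lapMatrix_dotProduct_mulVec (y : Fin (m + 1) → ℝ) :
    y ⬝ᵥ ((pathGraph (m + 1)).lapMatrix ℝ *ᵥ y) =
      ∑ k ∈ range m, (extendClamp y (k + 1) - extendClamp y k) ^ 2 := by
  rw [← toLinearMap₂'_apply', lapMatrix_toLinearMap₂']
  simp only [← extendClamp_val y]
  have hrow (i : Fin (m + 1)) :
      ∑ j, (if (pathGraph (m + 1)).Adj i j then (extendClamp y i - extendClamp y j) ^ 2 else 0) =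
        (extendClamp y (i + 1) - extendClamp y i) ^ 2 +
          (extendClamp y i - extendClamp y (i - 1)) ^ 2 := by
    rw [sum_pathGraph_adj i fun j => (extendClamp y i - extendClamp y j) ^ 2]
    split_ifs with hm h0
    · ring
    · rw [show (i : ℕ) = 0 by omega]; ring
    · rw [extendClamp_succ y (by omega)]; ring
    · rw [extendClamp_succ y (by omega), show (i : ℕ) = 0 by omega]; ring
  simp only [hrow]
  rw [Fin.sum_univ_eq_sum_range (fun i => (extendClamp y (i + 1) - extendClamp y i) ^ 2 +
      (extendClamp y i - extendClamp y (i - 1)) ^ 2), sum_add_distrib, sum_range_succ,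
    sum_range_succ', extendClamp_succ y le_rfl]
  simp only [Nat.add_sub_cancel, Nat.zero_sub, sub_self]
  ring

end Path

theorem discrete_wirtinger {m : ℕ} (y : Fin (m + 1) → ℝ) (hy : ∑ i, y i = 0) :
    2 * (1 - cos (π / (m + 1 : ℕ))) * (y ⬝ᵥ y) ≤
      ∑ k ∈ range m, (extendClamp y (k + 1) - extendClamp y k) ^ 2 := by
  have hL := isHermitian_lapMatrix ℝ (pathGraph (m + 1))
  rw [← pathGraph_lapMatrix_dotProduct_mulVec]
  refine le_dotProduct_mulVec_of_eigenvalues_lt hL y fun i hi => ?_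
  set e := ⇑(hL.eigenvectorBasis i)
  have heigen (k : ℕ) (hk : k < m + 1) :
      neumannLaplacian (extendClamp e) k = hL.eigenvalues i * extendClamp e k := by
    have := congrFun (hL.mulVec_eigenvectorBasis i) ⟨k, hk⟩
    rw [pathGraph_lapMatrix_mulVec_apply] at this
    rwa [show extendClamp e k = e ⟨k, hk⟩ from extendClamp_val e ⟨k, hk⟩]
  have hconst := neumannLaplacian_eigen_const ((posSemidef_lapMatrix ℝ _).eigenvalues_nonneg i)
    hi heigen (extendClamp_succ e le_rfl)
  calc e ⬝ᵥ y = ∑ j, extendClamp e 0 * y j :=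
        sum_congr rfl fun j _ => by rw [← extendClamp_val e, hconst j j.isLt]
    _ = 0 := by rw [← mul_sum, hy, mul_zero]

lemma edgeConnectivity_le_card_boundary {V : Type*} [Fintype V] (G : SimpleGraph V) (S : Set V)
    {a b : V} (ha : a ∈ S) (hb : b ∉ S) :
    edgeConnectivity G ≤ #{p : V × V | G.Adj p.1 p.2 ∧ p.1 ∈ S ∧ p.2 ∉ S} := by
  refine le_trans (Nat.sInf_le ⟨_, ?_, rfl, ?_⟩) (card_image_le (f := fun p : V × V => s(p.1, p.2)))
  · intro e he
    obtain ⟨p, hp, rfl⟩ := mem_image.1 he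
    exact (mem_filter.1 hp).2.1
  · intro hconn
    obtain ⟨w⟩ := hconn.preconnected a b
    obtain ⟨d, -, hd, hd'⟩ := w.exists_boundary_dart S ha hb
    have hadj := d.adj
    rw [deleteEdges_adj] at hadj
    exact hadj.2 (mem_image_of_mem _ (mem_filter.2 ⟨mem_univ _, hadj.1, hd, hd'⟩))

lemma sum_sq_sub_le_sq_of_monotone {u : ℕ → ℝ} (hu : Monotone u) {p q : ℕ} (hpq : p ≤ q) :
    ∑ k ∈ Ico p q, (u (k + 1) - u k) ^ 2 ≤ (u q - u p) ^ 2 := by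
  rw [← sum_Ico_sub u hpq]
  exact sum_sq_le_sq_sum_of_nonneg fun k _ => sub_nonneg.2 (hu k.le_succ)

lemma sum_crossing_sq_le_of_monotone {u : ℕ → ℝ} (hu : Monotone u) {N p q : ℕ} (hp : p ≤ N)
    (hq : q ≤ N) :
    ∑ k ∈ range N, ((if p ≤ k ∧ k < q then (u (k + 1) - u k) ^ 2 else 0) +
      (if q ≤ k ∧ k < p then (u (k + 1) - u k) ^ 2 else 0)) ≤ (u p - u q) ^ 2 := by
  wlog hpq : p ≤ q generalizing p q
  · simpa only [add_comm, sub_sq_comm] using this hq hp (le_of_not_ge hpq)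
  have hIco : (range N).filter (fun k => p ≤ k ∧ k < q) = Ico p q := by
    ext k; simp only [mem_filter, mem_range, mem_Ico]; omega
  rw [sum_add_distrib, ← sum_filter, hIco, sum_eq_zero fun k _ => if_neg (by omega), add_zero,
    sub_sq_comm]
  exact sum_sq_sub_le_sq_of_monotone hu hpq

lemma edgeConnectivity_mul_sum_sq_le {V : Type*} [Fintype V] [DecidableEq V] (G : SimpleGraph V)
    [DecidableRel G.Adj] {m : ℕ} (r : V ≃ Fin (m + 1)) {y : Fin (m + 1) → ℝ} (hy : Monotone y) :
    edgeConnectivity G * ∑ k ∈ range m, (extendClamp y (k + 1) - extendClamp y k) ^ 2 ≤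
      (y ∘ r) ⬝ᵥ (G.lapMatrix ℝ *ᵥ (y ∘ r)) := by
  set d : ℕ → ℝ := fun k => (extendClamp y (k + 1) - extendClamp y k) ^ 2
  set g : V → V → ℝ := fun a b =>
    ∑ k ∈ range m, if G.Adj a b ∧ (r a : ℕ) ≤ k ∧ k < r b then d k else 0
  have hpair (a b : V) : g a b + g b a ≤ if G.Adj a b then (y (r a) - y (r b)) ^ 2 else 0 := by
    by_cases hab : G.Adj a b
    · simp only [g, hab, hab.symm, true_and, if_true, ← sum_add_distrib]
      simpa using sum_crossing_sq_le_of_monotone (extendClamp_monotone hy)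
        (Fin.is_le (r a)) (Fin.is_le (r b))
    · simp [g, hab, G.adj_comm b a]
  have hcount : ∑ a, ∑ b, g a b =
      ∑ k ∈ range m, #{p : V × V | G.Adj p.1 p.2 ∧ (r p.1 : ℕ) ≤ k ∧ k < r p.2} * d k := by
    simp only [g]
    rw [← Fintype.sum_prod_type', sum_comm]
    refine sum_congr rfl fun k _ => ?_
    rw [← sum_filter, sum_const, nsmul_eq_mul]
  have hcut (k : ℕ) (hk : k ∈ range m) :
      (edgeConnectivity G : ℝ) ≤ #{p : V × V | G.Adj p.1 p.2 ∧ (r p.1 : ℕ) ≤ k ∧ k < r p.2} := by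
    have := edgeConnectivity_le_card_boundary G {a | (r a : ℕ) ≤ k} (a := r.symm 0)
      (b := r.symm (Fin.last m)) (by simp) (by simpa using mem_range.1 hk)
    simp only [Set.mem_ofPred_eq, not_le] at this
    exact_mod_cast this
  rw [← toLinearMap₂'_apply', lapMatrix_toLinearMap₂']
  calc (edgeConnectivity G : ℝ) * ∑ k ∈ range m, d k
      ≤ ∑ k ∈ range m, #{p : V × V | G.Adj p.1 p.2 ∧ (r p.1 : ℕ) ≤ k ∧ k < r p.2} * d k := by
        rw [mul_sum]
        exact sum_le_sum fun k hk => mul_le_mul_of_nonneg_right (hcut k hk) (sq_nonneg _)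
    _ = (∑ a, ∑ b, (g a b + g b a)) / 2 := by
        rw [← hcount]
        simp only [sum_add_distrib]
        rw [sum_comm (f := fun a b => g b a)]
        ring
    _ ≤ _ := by
        gcongr with a _ b
        exact hpair a b

theorem fiedler_lower_bound {V : ℕ} (hV : 2 ≤ V) (G : SimpleGraph (Fin V)) :
    sortedEigenvalues (G.lapMatrix ℝ) ⟨1, by omega⟩ ≥
      2 * (edgeConnectivity G : ℝ) * (1 - Real.cos (π / V)) := by
  obtain ⟨m, rfl⟩ : ∃ m, V = m + 1 := ⟨V - 1, by omega⟩
  refine le_sortedEigenvalues_one _ (isHermitian_lapMatrix ℝ G) (fun _ => 1) _ fun x hx => ?_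
  set σ := Tuple.sort x
  have hsum : ∑ i, (x ∘ σ) i = 0 := by
    rw [Function.comp_def, Equiv.sum_comp σ x]
    simpa [dotProduct] using hx
  have hnorm : (x ∘ σ) ⬝ᵥ (x ∘ σ) = x ⬝ᵥ x := Equiv.sum_comp σ fun i => x i * x i
  calc 2 * (edgeConnectivity G : ℝ) * (1 - cos (π / (m + 1 : ℕ))) * (x ⬝ᵥ x)
      = edgeConnectivity G * (2 * (1 - cos (π / (m + 1 : ℕ))) * ((x ∘ σ) ⬝ᵥ (x ∘ σ))) := by
        rw [hnorm]; ring
    _ ≤ edgeConnectivity G *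
          ∑ k ∈ range m, (extendClamp (x ∘ σ) (k + 1) - extendClamp (x ∘ σ) k) ^ 2 :=
        mul_le_mul_of_nonneg_left (discrete_wirtinger _ hsum) (Nat.cast_nonneg _)
    _ ≤ (x ∘ σ ∘ σ.symm) ⬝ᵥ (G.lapMatrix ℝ *ᵥ (x ∘ σ ∘ σ.symm)) :=
        edgeConnectivity_mul_sum_sq_le G σ.symm (Tuple.monotone_sort x)
    _ = x ⬝ᵥ (G.lapMatrix ℝ *ᵥ x) := by simp [Function.comp_def]
end

section
/- Let p ∈ (1,∞) and let G be a finite connected simple graph on V ≥ 2 vertices with edge connectivity η. Then the first nontrivial eigenvalue of the discrete p-Laplacian satisfies γ_1^{(p)}(G) ≥ η · γ_1^{(p)}(P_V), where P_V is the path graph on the same number V of vertices. -/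
open scoped Classical
open Real Finset

/-- The Rayleigh quotient of the discrete `p`-Laplacian of a finite simple graph. -/
noncomputable def pRayleigh {V : Type*} [Fintype V] (p : ℝ) (G : SimpleGraph V)
    (f : V → ℝ) : ℝ :=
  (∑ e ∈ G.edgeFinset,
      Sym2.lift ⟨fun u v => |f u - f v| ^ p, fun u v => by dsimp only; rw [abs_sub_comm]⟩ e) /
    (⨅ c : ℝ, ∑ v, |f v - c| ^ p)

/-- The first nontrivial eigenvalue of the discrete `p`-Laplacian, defined variationally
as the infimum of the Rayleigh quotient over nonconstant functions. -/
noncomputable def gamma1p {V : Type*} [Fintype V] (p : ℝ) (G : SimpleGraph V) : ℝ :=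
  sInf {r | ∃ f : V → ℝ, (¬ ∃ c : ℝ, ∀ v, f v = c) ∧ r = pRayleigh p G f}

/-!
Sort a nonconstant `f` increasingly, `f (σ 0) ≤ ⋯ ≤ f (σ (V - 1))`: the function `f ∘ σ` on
the path has the same denominator, and its energy is `∑ᵢ gᵢ ^ p` with the gaps
`gᵢ = f (σ (i + 1)) - f (σ i) ≥ 0`. For each `i`, the edges of `G` between ranks `≤ i` and `> i`
disconnect `G`, so there are at least `η` of them. An edge of `G` between ranks `a < b`
contributes `(∑_{a ≤ i < b} gᵢ) ^ p ≥ ∑_{a ≤ i < b} gᵢ ^ p` (superadditivity of `t ↦ t ^ p` for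
`p ≥ 1`), and summing over the edges counts each `gᵢ ^ p` at least `η` times.
-/

open SimpleGraph

lemma Real.sum_rpow_le_rpow_sum {ι : Type*} {p : ℝ} (hp : 1 ≤ p) {x : ι → ℝ} (s : Finset ι)
    (hx : ∀ i ∈ s, 0 ≤ x i) : ∑ i ∈ s, x i ^ p ≤ (∑ i ∈ s, x i) ^ p := by
  induction s using Finset.cons_induction with
  | empty => simp [Real.zero_rpow (by linarith : p ≠ 0)]
  | cons i s his ih =>
    rw [forall_mem_cons] at hx
    rw [sum_cons, sum_cons]
    calc x i ^ p + ∑ j ∈ s, x j ^ p ≤ x i ^ p + (∑ j ∈ s, x j) ^ p := by gcongr; exact ih hx.2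
      _ ≤ (x i + ∑ j ∈ s, x j) ^ p := Real.add_rpow_le_rpow_add hx.1 (sum_nonneg hx.2) hp

lemma sum_range_filter_rpow_sub_le {p : ℝ} (hp : 1 ≤ p) {F : ℕ → ℝ} (hF : Monotone F)
    {a b n : ℕ} (ha : a ≤ n) (hb : b ≤ n) :
    ∑ i ∈ range n with (a ≤ i ↔ ¬ b ≤ i), (F (i + 1) - F i) ^ p ≤ |F a - F b| ^ p := by
  wlog hab : a ≤ b generalizing a b
  · simpa only [abs_sub_comm, iff_not_comm] using this hb ha (by omega)
  have hfilter : (range n).filter (fun i => a ≤ i ↔ ¬ b ≤ i) = Ico a b := by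
    ext i; simp only [mem_filter, mem_range, mem_Ico]; omega
  rw [hfilter, abs_sub_comm, abs_of_nonneg (sub_nonneg.mpr (hF hab)), ← sum_Ico_sub F hab]
  exact Real.sum_rpow_le_rpow_sum hp _ fun i _ => sub_nonneg.mpr (hF i.le_succ)

variable {α : Type*} [Fintype α]

namespace SimpleGraph

noncomputable def edgeBoundary (G : SimpleGraph α) (A : Set α) : Finset (Sym2 α) :=
  G.edgeFinset.filter fun e => ∃ u ∈ A, ∃ v ∉ A, e = s(u, v)

lemma edgeBoundary_subset (G : SimpleGraph α) (A : Set α) : G.edgeBoundary A ⊆ G.edgeFinset :=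
  filter_subset _ _

lemma mk_mem_edgeBoundary {G : SimpleGraph α} {A : Set α} {u v : α} :
    s(u, v) ∈ G.edgeBoundary A ↔ G.Adj u v ∧ (u ∈ A ↔ v ∉ A) := by
  simp only [edgeBoundary, mem_filter, mem_edgeFinset, mem_edgeSet, Sym2.eq_iff]
  constructor
  · rintro ⟨hadj, x, hx, y, hy, ⟨rfl, rfl⟩ | ⟨rfl, rfl⟩⟩ <;> tauto
  · rintro ⟨hadj, h⟩
    by_cases hu : u ∈ A
    · exact ⟨hadj, u, hu, v, h.mp hu, .inl ⟨rfl, rfl⟩⟩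
    · exact ⟨hadj, v, not_not.mp (mt h.mpr hu), u, hu, .inr ⟨rfl, rfl⟩⟩

lemma edgeConnectivity_le_card_edgeBoundary (G : SimpleGraph α) {A : Set α} {u w : α}
    (hu : u ∈ A) (hw : w ∉ A) : edgeConnectivity G ≤ #(G.edgeBoundary A) := by
  refine Nat.sInf_le ⟨_, fun e he => mem_edgeFinset.mp (edgeBoundary_subset G A he), rfl,
    fun hconn => ?_⟩
  obtain ⟨d, -, hd, hd'⟩ := (hconn.preconnected u w).some.exists_boundary_dart A hu hw
  have hadj := (deleteEdges_adj ..).mp d.adj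
  exact hadj.2 (mk_mem_edgeBoundary.mpr ⟨hadj.1, iff_of_true hd hd'⟩)

lemma sum_edgeFinset_pathGraph {M : Type*} [AddCommMonoid M] (m : ℕ)
    (φ : Sym2 (Fin (m + 1)) → M) :
    ∑ e ∈ (pathGraph (m + 1)).edgeFinset, φ e = ∑ i : Fin m, φ s(i.castSucc, i.succ) := by
  symm
  refine sum_bij (fun i _ => s(i.castSucc, i.succ)) (fun i _ => ?_) (fun i _ j _ h => ?_)
    (fun e he => ?_) (fun _ _ => rfl)
  · simp [pathGraph_adj]
  · simp only [Sym2.eq_iff, Fin.ext_iff, Fin.val_castSucc, Fin.val_succ] at h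
    exact Fin.ext (by omega)
  · induction e using Sym2.ind with
    | _ u v =>
      rw [mem_edgeFinset, mem_edgeSet, pathGraph_adj] at he
      rcases he with h | h
      · exact ⟨⟨u, by omega⟩, mem_univ _, by congr 1; ext; simp [h]⟩
      · exact ⟨⟨v, by omega⟩, mem_univ _, by rw [Sym2.eq_swap]; congr 1; ext; simp [h]⟩

noncomputable def edgeEnergy (p : ℝ) (G : SimpleGraph α) (f : α → ℝ) : ℝ :=
  ∑ e ∈ G.edgeFinset,
    Sym2.lift ⟨fun u v => |f u - f v| ^ p, fun u v => by dsimp only; rw [abs_sub_comm]⟩ e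

lemma edgeEnergy_nonneg (p : ℝ) (G : SimpleGraph α) (f : α → ℝ) : 0 ≤ edgeEnergy p G f :=
  sum_nonneg fun e _ => by
    induction e using Sym2.ind with
    | _ u v => exact rpow_nonneg (abs_nonneg _) p

lemma edgeEnergy_pathGraph (p : ℝ) (m : ℕ) (F : ℕ → ℝ) :
    edgeEnergy p (pathGraph (m + 1)) (fun v => F v) = ∑ i ∈ range m, |F i - F (i + 1)| ^ p := by
  rw [edgeEnergy, sum_edgeFinset_pathGraph, ← Fin.sum_univ_eq_sum_range]
  rfl

lemma sum_card_edgeBoundary_mul_le_edgeEnergy (G : SimpleGraph α) {p : ℝ} (hp : 1 ≤ p)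
    {F : ℕ → ℝ} (hF : Monotone F) {r : α → ℕ} {n : ℕ} (hr : ∀ v, r v ≤ n) :
    ∑ i ∈ range n, (#(G.edgeBoundary {v | r v ≤ i}) : ℝ) * (F (i + 1) - F i) ^ p ≤
      edgeEnergy p G (F ∘ r) := by
  have hcount (i : ℕ) : (#(G.edgeBoundary {v | r v ≤ i}) : ℝ) * (F (i + 1) - F i) ^ p =
      ∑ e ∈ G.edgeFinset,
        if e ∈ G.edgeBoundary {v | r v ≤ i} then (F (i + 1) - F i) ^ p else 0 := by
    rw [sum_ite_mem, inter_eq_right.mpr (edgeBoundary_subset _ _), sum_const, nsmul_eq_mul]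
  simp_rw [hcount]
  rw [sum_comm]
  refine sum_le_sum fun e he => ?_
  induction e using Sym2.ind with
  | _ u v =>
    have hadj : G.Adj u v := by simpa using he
    simp only [mk_mem_edgeBoundary, hadj, true_and, Set.mem_ofPred_eq, ← sum_filter]
    exact sum_range_filter_rpow_sub_le hp hF (hr u) (hr v)

lemma edgeConnectivity_mul_edgeEnergy_pathGraph_le {p : ℝ} (hp : 1 ≤ p) {m : ℕ}
    (G : SimpleGraph (Fin (m + 1))) (f : Fin (m + 1) → ℝ) :
    edgeConnectivity G * edgeEnergy p (pathGraph (m + 1)) (f ∘ Tuple.sort f) ≤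
      edgeEnergy p G f := by
  set σ := Tuple.sort f
  set F : ℕ → ℝ := fun i => f (σ (Fin.clamp i m))
  have hF : Monotone F := (Tuple.monotone_sort f).comp Fin.clamp_monotone
  have hclamp (v : Fin (m + 1)) : Fin.clamp v m = v := Fin.ext (by simp [Fin.clamp]; omega)
  have hpath : f ∘ σ = fun v : Fin (m + 1) => F v := funext fun v => by simp [F, hclamp]
  have hrank : f = F ∘ fun v => (σ.symm v : ℕ) := funext fun v => by simp [F, hclamp]
  have hcut (i : ℕ) (hi : i ∈ range m) :
      (edgeConnectivity G : ℝ) ≤ #(G.edgeBoundary {v | (σ.symm v : ℕ) ≤ i}) := by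
    rw [mem_range] at hi
    exact_mod_cast G.edgeConnectivity_le_card_edgeBoundary (u := σ ⟨i, by omega⟩)
      (w := σ ⟨i + 1, by omega⟩) (by simp) (by simp)
  calc (edgeConnectivity G : ℝ) * edgeEnergy p (pathGraph (m + 1)) (f ∘ σ)
      = ∑ i ∈ range m, (edgeConnectivity G : ℝ) * (F (i + 1) - F i) ^ p := by
        rw [hpath, edgeEnergy_pathGraph, mul_sum]
        refine sum_congr rfl fun i _ => ?_
        rw [abs_sub_comm, abs_of_nonneg (sub_nonneg.mpr (hF i.le_succ))]
    _ ≤ ∑ i ∈ range m,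
          (#(G.edgeBoundary {v | (σ.symm v : ℕ) ≤ i}) : ℝ) * (F (i + 1) - F i) ^ p :=
        sum_le_sum fun i hi =>
          mul_le_mul_of_nonneg_right (hcut i hi) (rpow_nonneg (sub_nonneg.mpr (hF i.le_succ)) p)
    _ ≤ edgeEnergy p G f := by
        rw [hrank]
        exact G.sum_card_edgeBoundary_mul_le_edgeEnergy hp hF fun v => Fin.is_le _

end SimpleGraph

lemma iInf_sum_abs_sub_rpow_nonneg (p : ℝ) (f : α → ℝ) : 0 ≤ ⨅ c : ℝ, ∑ v, |f v - c| ^ p :=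
  le_ciInf fun _ => sum_nonneg fun _ _ => rpow_nonneg (abs_nonneg _) p

lemma pRayleigh_nonneg (p : ℝ) (G : SimpleGraph α) (f : α → ℝ) : 0 ≤ pRayleigh p G f :=
  div_nonneg (edgeEnergy_nonneg p G f) (iInf_sum_abs_sub_rpow_nonneg p f)

lemma mul_pRayleigh_comp_equiv_le {p c : ℝ} {G H : SimpleGraph α} {f : α → ℝ} (σ : α ≃ α)
    (h : c * edgeEnergy p H (f ∘ σ) ≤ edgeEnergy p G f) :
    c * pRayleigh p H (f ∘ σ) ≤ pRayleigh p G f := by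
  have hden : (⨅ c : ℝ, ∑ v, |(f ∘ σ) v - c| ^ p) = ⨅ c : ℝ, ∑ v, |f v - c| ^ p :=
    iInf_congr fun c => σ.sum_comp fun v => |f v - c| ^ p
  rw [pRayleigh, pRayleigh, hden, ← mul_div_assoc]
  exact div_le_div_of_nonneg_right h (iInf_sum_abs_sub_rpow_nonneg p f)

lemma mul_gamma1p_le_gamma1p {p c : ℝ} {G H : SimpleGraph α} (hc : 0 ≤ c)
    (h : ∀ f : α → ℝ, (¬ ∃ a, ∀ v, f v = a) →
      ∃ g : α → ℝ, (¬ ∃ a, ∀ v, g v = a) ∧ c * pRayleigh p H g ≤ pRayleigh p G f) :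
    c * gamma1p p H ≤ gamma1p p G := by
  by_cases hne : ∃ f : α → ℝ, ¬ ∃ a, ∀ v, f v = a
  · obtain ⟨f₀, hf₀⟩ := hne
    refine le_csInf ⟨_, f₀, hf₀, rfl⟩ ?_
    rintro _ ⟨f, hf, rfl⟩
    obtain ⟨g, hg, hle⟩ := h f hf
    have hbdd : BddBelow {r | ∃ f : α → ℝ, (¬ ∃ a, ∀ v, f v = a) ∧ r = pRayleigh p H f} :=
      ⟨0, by rintro _ ⟨f, -, rfl⟩; exact pRayleigh_nonneg p H f⟩
    exact (mul_le_mul_of_nonneg_left (csInf_le hbdd ⟨g, hg, rfl⟩) hc).trans hle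
  · -- both sets of Rayleigh quotients are empty, and `sInf ∅ = 0`
    simp [gamma1p, not_exists.mp hne]

theorem fiedler_pLaplacian_general {p : ℝ} (hp : 1 < p) {V : ℕ} (G : SimpleGraph (Fin V)) :
    gamma1p p G ≥ (edgeConnectivity G : ℝ) * gamma1p p (SimpleGraph.pathGraph V) := by
  refine mul_gamma1p_le_gamma1p (Nat.cast_nonneg _) fun f hf => ?_
  cases V with
  | zero => exact absurd ⟨0, fun v => v.elim0⟩ hf
  | succ m =>
    refine ⟨f ∘ Tuple.sort f, fun ⟨a, ha⟩ => hf ⟨a, fun v => ?_⟩,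
      mul_pRayleigh_comp_equiv_le _ (G.edgeConnectivity_mul_edgeEnergy_pathGraph_le hp.le f)⟩
    simpa using ha ((Tuple.sort f).symm v)

theorem fiedler_pLaplacian {p : ℝ} (hp : 1 < p) {V : ℕ} (hV : 2 ≤ V)
    (G : SimpleGraph (Fin V)) (hG : G.Connected) :
    gamma1p p G ≥ (edgeConnectivity G : ℝ) * gamma1p p (SimpleGraph.pathGraph V) :=
  fiedler_pLaplacian_general hp G
end

section
/- Let G be a finite connected simple graph on V ≥ 2 vertices with E edges which is not a cycle graph, and let V* denote the number of vertices of G of degree at least 2. Then for every integer k with 2 ≤ k ≤ V and 2k − V − V* − 1 + E ≤ 0, the eigenvalues of the normalized Laplacian satisfy α_{k−1}(G) ≤ 1 − cos((2k + 3E − V − V* − 1)π/(2E)). -/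
open scoped Classical
open Real Finset

/-- The normalized Laplacian matrix `I - D^{-1/2} A D^{-1/2}` of a finite simple graph. -/
noncomputable def normLapMatrix {n : ℕ} (G : SimpleGraph (Fin n)) :
    Matrix (Fin n) (Fin n) ℝ :=
  1 - Matrix.diagonal (fun v => (Real.sqrt (G.degree v))⁻¹) * G.adjMatrix ℝ *
    Matrix.diagonal (fun v => (Real.sqrt (G.degree v))⁻¹)

/-!
Put `s = V + V* + 1 - E - 2k ≥ 0`, so that the angle is `π - sπ/(2E)`. If `s = 0` the bound is `2`,
which bounds the whole spectrum of `𝓛`. Otherwise the bound is at least `1`, and by the min-max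
principle it suffices to find a `k`-dimensional space of vectors on which the Rayleigh quotient of
`𝓛` is at most `1`. A connected graph has a vertex cover `U` with `2|U| ≤ E + 1`: two-colour a
spanning tree; each colour class together with one endpoint of every edge inside the other class is
a cover, and the two covers have total size at most `V + (E - (V - 1))`. The Rayleigh quotient of
`𝓛` is `1` on the vectors vanishing on `U`, a space of dimension `V - |U| ≥ k`.
-/

open Matrix

namespace Matrix.IsHermitian

variable {ι : Type*} [Fintype ι] [DecidableEq ι] {M : Matrix ι ι ℝ} (hM : M.IsHermitian)

lemma eigenvectorBasis_repr_toLp (y : ι → ℝ) (i : ι) :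
    hM.eigenvectorBasis.repr (WithLp.toLp 2 y) i = y ⬝ᵥ hM.eigenvectorBasis i := by
  rw [OrthonormalBasis.repr_apply_apply, EuclideanSpace.inner_eq_star_dotProduct, star_trivial]

lemma eigenvectorBasis_repr_toLp_mulVec (y : ι → ℝ) (i : ι) :
    hM.eigenvectorBasis.repr (WithLp.toLp 2 (M *ᵥ y)) i =
      hM.eigenvalues i * hM.eigenvectorBasis.repr (WithLp.toLp 2 y) i := by
  have hMt : Mᵀ = M := by rw [← conjTranspose_eq_transpose_of_trivial, hM.eq]
  rw [eigenvectorBasis_repr_toLp, eigenvectorBasis_repr_toLp, dotProduct_comm, dotProduct_mulVec,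
    ← mulVec_transpose, hMt, mulVec_eigenvectorBasis, smul_dotProduct, smul_eq_mul, dotProduct_comm]

lemma dotProduct_self_eq_sum (y : ι → ℝ) :
    y ⬝ᵥ y = ∑ i, hM.eigenvectorBasis.repr (WithLp.toLp 2 y) i ^ 2 := by
  simp_rw [OrthonormalBasis.repr_apply_apply]
  rw [hM.eigenvectorBasis.sum_sq_inner_right, EuclideanSpace.norm_sq_eq]
  simp [dotProduct, sq]

lemma dotProduct_mulVec_eq_sum (y : ι → ℝ) :
    y ⬝ᵥ M *ᵥ y = ∑ i, hM.eigenvalues i * hM.eigenvectorBasis.repr (WithLp.toLp 2 y) i ^ 2 := by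
  have := hM.eigenvectorBasis.repr.inner_map_map (WithLp.toLp 2 y) (WithLp.toLp 2 (M *ᵥ y))
  rw [EuclideanSpace.inner_toLp_toLp, EuclideanSpace.inner_eq_star_dotProduct] at this
  simp only [dotProduct, eigenvectorBasis_repr_toLp_mulVec, star_trivial] at this
  rw [dotProduct_comm, dotProduct, ← this]
  exact sum_congr rfl fun i _ => by ring

theorem finrank_le_card_filter_eigenvalues_le (W : Submodule ℝ (ι → ℝ)) {R : ℝ}
    (hR : ∀ y ∈ W, y ⬝ᵥ M *ᵥ y ≤ R * (y ⬝ᵥ y)) :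
    Module.finrank ℝ W ≤ #{i | hM.eigenvalues i ≤ R} := by
  set S : Finset ι := {i | hM.eigenvalues i ≤ R}
  by_contra! hlt
  set c : (ι → ℝ) →ₗ[ℝ] ι → ℝ := (WithLp.linearEquiv 2 ℝ (ι → ℝ)).toLinearMap ∘ₗ
    hM.eigenvectorBasis.repr.toLinearMap ∘ₗ (WithLp.linearEquiv 2 ℝ (ι → ℝ)).symm.toLinearMap
  set f : W →ₗ[ℝ] S → ℝ := LinearMap.funLeft ℝ ℝ ((↑) : S → ι) ∘ₗ c ∘ₗ W.subtype
  obtain ⟨⟨y, hyW⟩, hyker, hy0⟩ := Submodule.exists_mem_ne_zero_of_ne_bot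
    (LinearMap.ker_ne_bot_of_finrank_lt (f := f) (by simpa using hlt))
  have hyS : ∀ i ∈ S, hM.eigenvectorBasis.repr (WithLp.toLp 2 y) i = 0 := fun i hi =>
    congrFun (LinearMap.mem_ker.1 hyker) ⟨i, hi⟩
  obtain ⟨i₀, hi₀⟩ : ∃ i, hM.eigenvectorBasis.repr (WithLp.toLp 2 y) i ≠ 0 := by
    by_contra! h
    have hy : y ⬝ᵥ y = 0 := by simp [dotProduct_self_eq_sum hM, h]
    exact hy0 (Subtype.ext (dotProduct_self_eq_zero.1 hy))
  have hlt : R * (y ⬝ᵥ y) < y ⬝ᵥ M *ᵥ y := by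
    rw [dotProduct_self_eq_sum hM, dotProduct_mulVec_eq_sum hM, mul_sum]
    refine sum_lt_sum (fun i _ => ?_) ⟨i₀, mem_univ _, ?_⟩
    · by_cases hi : i ∈ S
      · simp [hyS i hi]
      · exact mul_le_mul_of_nonneg_right (by simpa [S] using hi : R < _).le (sq_nonneg _)
    · have hi₀S : i₀ ∉ S := fun h => hi₀ (hyS i₀ h)
      exact mul_lt_mul_of_pos_right (by simpa [S] using hi₀S) (by positivity)
  linarith [hR y hyW]

end Matrix.IsHermitian

theorem sortedEigenvalues_le_of_lt_card_filter {n : ℕ} {M : Matrix (Fin n) (Fin n) ℝ}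
    (hM : M.IsHermitian) {R : ℝ} (j : Fin n) (hj : (j : ℕ) < #{i | hM.eigenvalues i ≤ R}) :
    sortedEigenvalues M j ≤ R := by
  rw [sortedEigenvalues, dif_pos hM]
  by_contra! hR
  have hmaps : ∀ i ∈ ({i | hM.eigenvalues i ≤ R} : Finset (Fin n)),
      (Tuple.sort hM.eigenvalues).symm i ∈ Iio j := by
    intro i hi
    by_contra! hji
    have := Tuple.monotone_sort hM.eigenvalues (not_lt.1 (by simpa using hji))
    simp only [Function.comp_apply, Equiv.apply_symm_apply] at this hR
    linarith [(mem_filter.1 hi).2]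
  have := card_le_card_of_injOn _ hmaps (Tuple.sort hM.eigenvalues).symm.injective.injOn
  simp only [Fin.card_Iio] at this
  omega

lemma card_le_finrank_ker_funLeft_add_card {K ι : Type*} [Field K] [Fintype ι] (U : Finset ι) :
    Fintype.card ι ≤
      Module.finrank K (LinearMap.ker (LinearMap.funLeft K K ((↑) : U → ι))) + #U := by
  have h := (LinearMap.funLeft K K ((↑) : U → ι)).finrank_range_add_finrank_ker
  have := (LinearMap.range (LinearMap.funLeft K K ((↑) : U → ι))).finrank_le
  simp only [Module.finrank_fintype_fun_eq_card, Fintype.card_coe] at h this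
  omega

theorem sortedEigenvalues_le_of_dotProduct_mulVec_le {n : ℕ} {M : Matrix (Fin n) (Fin n) ℝ}
    (hM : M.IsHermitian) (U : Finset (Fin n)) (j : Fin n) (hj : (j : ℕ) + 1 + #U ≤ n) {R : ℝ}
    (hR : ∀ y : Fin n → ℝ, (∀ u ∈ U, y u = 0) → y ⬝ᵥ M *ᵥ y ≤ R * (y ⬝ᵥ y)) :
    sortedEigenvalues M j ≤ R := by
  refine sortedEigenvalues_le_of_lt_card_filter hM j ?_
  have hW := hM.finrank_le_card_filter_eigenvalues_le
    (LinearMap.ker (LinearMap.funLeft ℝ ℝ ((↑) : U → Fin n))) (R := R) fun y hy =>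
      hR y fun u hu => congrFun (LinearMap.mem_ker.1 hy) ⟨u, hu⟩
  have := card_le_finrank_ker_funLeft_add_card (K := ℝ) U
  simp only [Fintype.card_fin] at this
  omega

namespace SimpleGraph

variable {V : Type*} [Fintype V] {G : SimpleGraph V} [DecidableRel G.Adj]

theorem IsVertexCover.dotProduct_mulVec_adjMatrix_eq_zero {R : Type*} [NonAssocSemiring R]
    {U : Set V} (hU : G.IsVertexCover U) {x : V → R} (hx : ∀ u ∈ U, x u = 0) :
    x ⬝ᵥ G.adjMatrix R *ᵥ x = 0 := by
  rw [dotProduct_mulVec_adjMatrix]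
  refine sum_eq_zero fun i _ => sum_eq_zero fun j _ => ?_
  split_ifs with hij
  · rcases hU hij with h | h <;> simp [hx _ h]
  · rfl

variable [DecidableEq V] (G)

theorem neg_dotProduct_mulVec_degMatrix_le {R : Type*} [Field R] [LinearOrder R]
    [IsStrictOrderedRing R] (x : V → R) :
    -(x ⬝ᵥ G.degMatrix R *ᵥ x) ≤ x ⬝ᵥ G.adjMatrix R *ᵥ x := by
  have hleft : x ⬝ᵥ G.degMatrix R *ᵥ x = ∑ i, ∑ j, if G.Adj i j then x i ^ 2 else 0 := by
    rw [dotProduct_mulVec_degMatrix]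
    simp_rw [G.degree_eq_sum_if_adj (R := R), sum_mul, ite_mul, one_mul, zero_mul, sq]
  have hright : x ⬝ᵥ G.degMatrix R *ᵥ x = ∑ i, ∑ j, if G.Adj i j then x j ^ 2 else 0 := by
    rw [hleft, sum_comm]
    simp_rw [G.adj_comm]
  have hsq : 0 ≤ ∑ i, ∑ j, if G.Adj i j then (x i + x j) ^ 2 else 0 :=
    sum_nonneg fun i _ => sum_nonneg fun j _ => by split_ifs <;> positivity
  have hexpand : ∑ i, ∑ j, (if G.Adj i j then (x i + x j) ^ 2 else 0) =
      2 * (x ⬝ᵥ G.degMatrix R *ᵥ x) + 2 * (x ⬝ᵥ G.adjMatrix R *ᵥ x) := by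
    rw [two_mul, add_assoc]
    nth_rw 1 [hleft]
    rw [hright, dotProduct_mulVec_adjMatrix, mul_sum, ← sum_add_distrib, ← sum_add_distrib]
    refine sum_congr rfl fun i _ => ?_
    rw [mul_sum, ← sum_add_distrib, ← sum_add_distrib]
    refine sum_congr rfl fun j _ => ?_
    split_ifs <;> ring
  linarith

lemma exists_isVertexCover_card_le (A : Finset V) :
    ∃ U : Finset V, G.IsVertexCover U ∧ #U ≤ #Aᶜ + #{e ∈ G.edgeFinset | ∀ v ∈ e, v ∈ A} := by
  refine ⟨Aᶜ ∪ {e ∈ G.edgeFinset | ∀ v ∈ e, v ∈ A}.image (fun e => e.out.1), ?_,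
    (card_union_le _ _).trans (Nat.add_le_add_left card_image_le _)⟩
  intro v w hvw
  by_cases hA : v ∈ A ∧ w ∈ A
  · have he : s(v, w) ∈ {e ∈ G.edgeFinset | ∀ v ∈ e, v ∈ A} := by simp [hvw, hA]
    have hout := Sym2.out_fst_mem s(v, w)
    rw [Sym2.mem_iff] at hout
    rcases hout with h | h
    · exact Or.inl (h ▸ mem_union_right _ (mem_image_of_mem _ he))
    · exact Or.inr (h ▸ mem_union_right _ (mem_image_of_mem _ he))
  · rw [not_and_or] at hA
    rcases hA with h | h
    · exact Or.inl (by simp [h])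
    · exact Or.inr (by simp [h])

lemma exists_isVertexCover_two_mul_card_le_of_isBipartiteWith {H : SimpleGraph V}
    [Fintype H.edgeSet] (hHG : H ≤ G) {s t : Set V} (hH : H.IsBipartiteWith s t) :
    ∃ U : Finset V, G.IsVertexCover U ∧
      2 * #U + #H.edgeFinset ≤ Fintype.card V + #G.edgeFinset := by
  set A : Finset V := s.toFinset
  obtain ⟨U₁, hU₁, hc₁⟩ := G.exists_isVertexCover_card_le A
  obtain ⟨U₂, hU₂, hc₂⟩ := G.exists_isVertexCover_card_le Aᶜ
  set IA : Finset (Sym2 V) := {e ∈ G.edgeFinset | ∀ v ∈ e, v ∈ A}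
  set IB : Finset (Sym2 V) := {e ∈ G.edgeFinset | ∀ v ∈ e, v ∈ Aᶜ}
  have hcross : ∀ v w, H.Adj v w → (v ∈ A ↔ w ∉ A) := by
    intro v w hvw
    rcases hH.mem_of_adj hvw with ⟨hv, hw⟩ | ⟨hv, hw⟩
    · simp [A, hv, Set.disjoint_right.1 hH.disjoint hw]
    · simp [A, hw, Set.disjoint_right.1 hH.disjoint hv]
  have hsub : IA ∪ IB ⊆ G.edgeFinset \ H.edgeFinset := by
    intro e he
    induction e using Sym2.ind with
    | _ v w =>
      simp only [IA, IB, mem_union, mem_filter, Sym2.mem_iff, forall_eq_or_imp, forall_eq,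
        mem_compl] at he
      refine mem_sdiff.2 ⟨by tauto, fun hH => ?_⟩
      have := hcross v w (mem_edgeFinset.1 hH)
      tauto
  have hdisj : Disjoint IA IB := by
    refine Finset.disjoint_left.2 fun e he he' => ?_
    exact mem_compl.1 ((mem_filter.1 he').2 _ e.out_fst_mem) ((mem_filter.1 he).2 _ e.out_fst_mem)
  have hcount : #IA + #IB + #H.edgeFinset ≤ #G.edgeFinset := by
    have := card_le_card hsub
    rw [card_union_of_disjoint hdisj, card_sdiff_of_subset (edgeFinset_mono hHG)] at this
    have := card_le_card (edgeFinset_mono hHG)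
    omega
  have hA := card_add_card_compl A
  rw [compl_compl] at hc₂
  rcases le_total #U₁ #U₂ with h | h
  exacts [⟨U₁, hU₁, by omega⟩, ⟨U₂, hU₂, by omega⟩]

theorem Connected.exists_isVertexCover_two_mul_card_le (hG : G.Connected) :
    ∃ U : Finset V, G.IsVertexCover U ∧ 2 * #U ≤ #G.edgeFinset + 1 := by
  obtain ⟨T, hTG, hT⟩ := hG.exists_isTree_le
  obtain ⟨s, t, hst⟩ := hT.isBipartite.exists_isBipartiteWith
  obtain ⟨U, hU, hcard⟩ := G.exists_isVertexCover_two_mul_card_le_of_isBipartiteWith hTG hst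
  have := hT.card_edgeFinset
  exact ⟨U, hU, by omega⟩

end SimpleGraph

section NormalizedLaplacian

variable {n : ℕ} (G : SimpleGraph (Fin n))

theorem normLapMatrix_isHermitian : (normLapMatrix G).IsHermitian := by
  refine isHermitian_one.sub ?_
  rw [IsHermitian, conjTranspose_mul, conjTranspose_mul, diagonal_conjTranspose,
    (G.isHermitian_adjMatrix ℝ).eq, Matrix.mul_assoc]
  simp

theorem dotProduct_normLapMatrix_mulVec (y : Fin n → ℝ) :
    y ⬝ᵥ normLapMatrix G *ᵥ y = y ⬝ᵥ y -
      (fun v => (√(G.degree v))⁻¹ * y v) ⬝ᵥ G.adjMatrix ℝ *ᵥ fun v => (√(G.degree v))⁻¹ * y v := by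
  rw [normLapMatrix, sub_mulVec, one_mulVec, dotProduct_sub, ← mulVec_mulVec, ← mulVec_mulVec,
    dotProduct_mulVec]
  congr 2 <;> ext v <;> simp [vecMul_diagonal, mulVec_diagonal, mul_comm]

theorem dotProduct_normLapMatrix_mulVec_of_isVertexCover {U : Set (Fin n)}
    (hU : G.IsVertexCover U) {y : Fin n → ℝ} (hy : ∀ u ∈ U, y u = 0) :
    y ⬝ᵥ normLapMatrix G *ᵥ y = y ⬝ᵥ y := by
  rw [dotProduct_normLapMatrix_mulVec,
    hU.dotProduct_mulVec_adjMatrix_eq_zero fun u hu => by simp [hy u hu], sub_zero]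

theorem dotProduct_normLapMatrix_mulVec_le (y : Fin n → ℝ) :
    y ⬝ᵥ normLapMatrix G *ᵥ y ≤ 2 * (y ⬝ᵥ y) := by
  rw [dotProduct_normLapMatrix_mulVec]
  set z : Fin n → ℝ := fun v => (√(G.degree v))⁻¹ * y v
  have hz : z ⬝ᵥ G.degMatrix ℝ *ᵥ z ≤ y ⬝ᵥ y := by
    rw [SimpleGraph.dotProduct_mulVec_degMatrix, dotProduct]
    refine sum_le_sum fun v _ => ?_
    have hdeg : (G.degree v : ℝ) * (√(G.degree v))⁻¹ ^ 2 ≤ 1 := by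
      rw [inv_pow, sq_sqrt (Nat.cast_nonneg _)]
      exact mul_inv_le_one
    calc (G.degree v : ℝ) * z v * z v = (G.degree v * (√(G.degree v))⁻¹ ^ 2) * (y v * y v) := by
          ring
      _ ≤ y v * y v := mul_le_of_le_one_left (mul_self_nonneg _) hdeg
  linarith [G.neg_dotProduct_mulVec_degMatrix_le z]

end NormalizedLaplacian

lemma one_le_one_sub_cos_mul_pi_div {a b : ℝ} (hb : 0 < b) (h₁ : b ≤ a) (h₂ : a ≤ 3 * b) :
    1 ≤ 1 - cos (a * π / (2 * b)) := by
  have hcos : cos (a * π / (2 * b)) ≤ 0 := by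
    apply cos_nonpos_of_pi_div_two_le_of_le
    · rw [le_div_iff₀ (by positivity)]
      nlinarith [pi_pos]
    · rw [div_le_iff₀ (by positivity)]
      nlinarith [pi_pos]
  linarith

theorem normalized_laplacian_upper_bound {V : ℕ} (G : SimpleGraph (Fin V))
    (hG : G.Connected) (E Vstar : ℕ) (hE : E = G.edgeFinset.card)
    (hVstar : Vstar = (Finset.univ.filter fun v => 2 ≤ G.degree v).card)
    (k : ℕ) (hk2 : 2 ≤ k) (hkV : k ≤ V)
    (hcond : 2 * (k : ℤ) - V - Vstar - 1 + E ≤ 0) :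
    sortedEigenvalues (normLapMatrix G) ⟨k - 1, by omega⟩ ≤
      1 - Real.cos ((2 * (k : ℝ) + 3 * E - V - Vstar - 1) * π / (2 * E)) := by
  have hVstarV : Vstar ≤ V := hVstar ▸ (card_filter_le _ _).trans_eq (card_fin V)
  have hVE : V ≤ E + 1 := by
    simpa [hE, Nat.card_eq_fintype_card, SimpleGraph.edgeFinset_card] using
      hG.card_vert_le_card_edgeSet_add_one
  have hEpos : (0 : ℝ) < E := by exact_mod_cast (by omega : 0 < E)
  rcases (by omega : 2 * k + E = V + Vstar + 1 ∨ 2 * k + E ≤ V + Vstar) with hs | hs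
  · have hangle : (2 * (k : ℝ) + 3 * E - V - Vstar - 1) * π / (2 * E) = π := by
      have hs' : (2 * k + E : ℝ) = V + Vstar + 1 := by exact_mod_cast hs
      field_simp
      linarith
    rw [hangle, cos_pi, sub_neg_eq_add, one_add_one_eq_two]
    exact sortedEigenvalues_le_of_dotProduct_mulVec_le (normLapMatrix_isHermitian G) ∅ _
      (by rw [card_empty]; omega) fun y _ => dotProduct_normLapMatrix_mulVec_le G y
  · obtain ⟨U, hU, hUcard⟩ := hG.exists_isVertexCover_two_mul_card_le
    refine le_trans ?_ (one_le_one_sub_cos_mul_pi_div hEpos ?_ ?_)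
    · exact sortedEigenvalues_le_of_dotProduct_mulVec_le (normLapMatrix_isHermitian G) U _
        (by dsimp only; omega) fun y hy => by
          rw [dotProduct_normLapMatrix_mulVec_of_isVertexCover G hU hy, one_mul]
    · have : V + Vstar + 1 ≤ 2 * k + 2 * E := by omega
      have : (V + Vstar + 1 : ℝ) ≤ 2 * k + 2 * E := by exact_mod_cast this
      linarith
    · have : (2 * k + E : ℝ) ≤ V + Vstar := by exact_mod_cast hs
      linarith
end

section
/- Let G be a finite connected simple graph on V ≥ 2 vertices, with minimal vertex degree deg_min(G) and maximal vertex degree deg_max(G). Then for every index k with 0 ≤ k ≤ V − 1, the eigenvalues of the Laplacian matrix and of the normalized Laplacian satisfy α_k(G) · deg_max(G) ≥ γ_k(G) ≥ α_k(G) · deg_min(G). -/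
open scoped Classical
open Real Finset

/-!
With `N = D^{1/2}` one has `L = N 𝓛 N`, so `⟪x, L x⟫ = ⟪N x, 𝓛 (N x)⟫`, while
`deg_min ‖x‖² ≤ ‖N x‖² ≤ deg_max ‖x‖²`. By the Courant–Fischer min-max characterisation
of the `k`-th eigenvalue, a congruence `A ↦ Sᴴ A S` of a positive semidefinite `A` by any
`S` with `c ‖x‖² ≤ ‖S x‖² ≤ C ‖x‖²` moves the `k`-th eigenvalue into
`[c λ_k(A), C λ_k(A)]` (Ostrowski's theorem); here `A = 𝓛` and `S = N`.
-/

open scoped RealInnerProductSpace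
open Module Submodule Matrix

theorem Submodule.finrank_le_finrank_comap {K V : Type*} [Field K] [AddCommGroup V] [Module K V]
    [FiniteDimensional K V] (f : V →ₗ[K] V) (U : Submodule K V) :
    finrank K U ≤ finrank K (U.comap f) := by
  have h₁ := (U.mkQ.comp f).finrank_range_add_finrank_ker
  have h₂ := U.finrank_quotient_add_finrank
  have h₃ := (LinearMap.range (U.mkQ.comp f)).finrank_le
  rw [LinearMap.ker_comp, Submodule.ker_mkQ] at h₁
  omega

theorem Submodule.exists_mem_mem_ne_zero_of_finrank_lt_add {K V : Type*} [Field K]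
    [AddCommGroup V] [Module K V] [FiniteDimensional K V] {U W : Submodule K V}
    (h : finrank K V < finrank K U + finrank K W) : ∃ x ∈ U, x ∈ W ∧ x ≠ 0 := by
  simpa [disjoint_def] using fun hd => (finrank_add_finrank_le_of_disjoint hd).not_gt h

namespace OrthonormalBasis

variable {ι E : Type*} [Fintype ι] [NormedAddCommGroup E] [InnerProductSpace ℝ E]
  (b : OrthonormalBasis ι ℝ E)

theorem finrank_span_image (s : Finset ι) : finrank ℝ (span ℝ (b '' s)) = s.card := by
  rw [Set.image_eq_range]
  exact (finrank_span_eq_card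
    (b.orthonormal.linearIndependent.comp _ Subtype.val_injective)).trans (by simp)

variable {T : E →ₗ[ℝ] E} {μ : ι → ℝ}

theorem inner_map_self_eq_sum (hT : ∀ i, T (b i) = μ i • b i) (x : E) :
    ⟪x, T x⟫ = ∑ i, μ i * ⟪b i, x⟫ ^ 2 := by
  have hTx : T x = ∑ i, (μ i * ⟪b i, x⟫) • b i := by
    conv_lhs => rw [← b.sum_repr' x]
    simp only [map_sum, map_smul, hT, smul_smul, mul_comm]
  rw [← b.sum_inner_mul_inner x (T x)]
  refine Finset.sum_congr rfl fun i _ => ?_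
  rw [hTx, b.orthonormal.inner_right_fintype, real_inner_comm]
  ring

theorem inner_eq_zero_of_mem_span {s : Set ι} {i : ι} (hi : i ∉ s) {x : E}
    (hx : x ∈ span ℝ (b '' s)) : ⟪b i, x⟫ = 0 := by
  refine mem_orthogonal_singleton_iff_inner_right.1 (span_le.2 ?_ hx)
  rintro _ ⟨j, hj, rfl⟩
  exact mem_orthogonal_singleton_iff_inner_right.2
    (b.orthonormal.2 (ne_of_mem_of_not_mem hj hi).symm)

theorem inner_map_self_le_of_mem_span (hT : ∀ i, T (b i) = μ i • b i) {s : Set ι} {m : ℝ}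
    (hμ : ∀ i ∈ s, μ i ≤ m) {x : E} (hx : x ∈ span ℝ (b '' s)) :
    ⟪x, T x⟫ ≤ m * ‖x‖ ^ 2 := by
  rw [b.inner_map_self_eq_sum hT, ← b.sum_sq_inner_right, Finset.mul_sum]
  refine Finset.sum_le_sum fun i _ => ?_
  by_cases hi : i ∈ s
  · exact mul_le_mul_of_nonneg_right (hμ i hi) (sq_nonneg _)
  · simp [b.inner_eq_zero_of_mem_span hi hx]

theorem le_inner_map_self_of_mem_span (hT : ∀ i, T (b i) = μ i • b i) {s : Set ι} {m : ℝ}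
    (hμ : ∀ i ∈ s, m ≤ μ i) {x : E} (hx : x ∈ span ℝ (b '' s)) :
    m * ‖x‖ ^ 2 ≤ ⟪x, T x⟫ := by
  have hT' : ∀ i, (-T) (b i) = (-μ i) • b i := fun i => by simp [hT]
  have := b.inner_map_self_le_of_mem_span hT' (m := -m) (fun i hi => neg_le_neg (hμ i hi)) hx
  simp only [LinearMap.neg_apply, inner_neg_right] at this
  linarith

end OrthonormalBasis

theorem Matrix.inner_toEuclideanLin_conjTranspose_mul_mul {n : Type*} [Fintype n]
    [DecidableEq n] (A S : Matrix n n ℝ) (x : EuclideanSpace ℝ n) :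
    ⟪x, toEuclideanLin (Sᴴ * A * S) x⟫ =
      ⟪toEuclideanLin S x, toEuclideanLin A (toEuclideanLin S x)⟫ := by
  rw [Matrix.mul_assoc, toLpLin_mul_same, toEuclideanLin_conjTranspose_eq_adjoint]
  simp [toLpLin_mul_same, LinearMap.adjoint_inner_right]

namespace Matrix.IsHermitian

variable {n : ℕ} {A : Matrix (Fin n) (Fin n) ℝ} (hA : A.IsHermitian)
include hA

theorem sortedEigenvalues_eq :
    sortedEigenvalues A = hA.eigenvalues ∘ Tuple.sort hA.eigenvalues :=
  dif_pos hA

theorem toEuclideanLin_eigenvectorBasis (i : Fin n) :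
    toEuclideanLin A (hA.eigenvectorBasis i) = hA.eigenvalues i • hA.eigenvectorBasis i := by
  ext j
  simpa using congrFun (hA.mulVec_eigenvectorBasis i) j

theorem exists_finrank_eq_forall_inner_le (k : Fin n) :
    ∃ U : Submodule ℝ (EuclideanSpace ℝ (Fin n)), finrank ℝ U = k + 1 ∧
      ∀ x ∈ U, ⟪x, toEuclideanLin A x⟫ ≤ sortedEigenvalues A k * ‖x‖ ^ 2 := by
  refine ⟨span ℝ (hA.eigenvectorBasis '' ((Finset.Iic k).map
    (Tuple.sort hA.eigenvalues).toEmbedding)), ?_, fun x hx => ?_⟩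
  · rw [OrthonormalBasis.finrank_span_image, card_map, Fin.card_Iic]
  · refine hA.eigenvectorBasis.inner_map_self_le_of_mem_span hA.toEuclideanLin_eigenvectorBasis
      ?_ hx
    simp only [coe_map, Set.mem_image, mem_coe, mem_Iic, hA.sortedEigenvalues_eq]
    rintro _ ⟨j, hj, rfl⟩
    exact Tuple.monotone_sort hA.eigenvalues hj

theorem exists_finrank_eq_forall_le_inner (k : Fin n) :
    ∃ U : Submodule ℝ (EuclideanSpace ℝ (Fin n)), finrank ℝ U = n - k ∧
      ∀ x ∈ U, sortedEigenvalues A k * ‖x‖ ^ 2 ≤ ⟪x, toEuclideanLin A x⟫ := by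
  refine ⟨span ℝ (hA.eigenvectorBasis '' ((Finset.Ici k).map
    (Tuple.sort hA.eigenvalues).toEmbedding)), ?_, fun x hx => ?_⟩
  · rw [OrthonormalBasis.finrank_span_image, card_map, Fin.card_Ici]
  · refine hA.eigenvectorBasis.le_inner_map_self_of_mem_span hA.toEuclideanLin_eigenvectorBasis
      ?_ hx
    simp only [coe_map, Set.mem_image, mem_coe, mem_Ici, hA.sortedEigenvalues_eq]
    rintro _ ⟨j, hj, rfl⟩
    exact Tuple.monotone_sort hA.eigenvalues hj

theorem le_sortedEigenvalues_of_forall_le_inner (k : Fin n)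
    {U : Submodule ℝ (EuclideanSpace ℝ (Fin n))} (hU : n - k ≤ finrank ℝ U) {m : ℝ}
    (hm : ∀ x ∈ U, m * ‖x‖ ^ 2 ≤ ⟪x, toEuclideanLin A x⟫) : m ≤ sortedEigenvalues A k := by
  obtain ⟨U', hU', hU'A⟩ := hA.exists_finrank_eq_forall_inner_le k
  obtain ⟨x, hx, hx', hx0⟩ := exists_mem_mem_ne_zero_of_finrank_lt_add (U := U) (W := U')
    (by rw [finrank_euclideanSpace_fin]; omega)
  exact le_of_mul_le_mul_right ((hm x hx).trans (hU'A x hx')) (pow_pos (norm_pos_iff.2 hx0) 2)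

theorem sortedEigenvalues_le_of_forall_inner_le (k : Fin n)
    {U : Submodule ℝ (EuclideanSpace ℝ (Fin n))} (hU : k + 1 ≤ finrank ℝ U) {m : ℝ}
    (hm : ∀ x ∈ U, ⟪x, toEuclideanLin A x⟫ ≤ m * ‖x‖ ^ 2) : sortedEigenvalues A k ≤ m := by
  obtain ⟨U', hU', hU'A⟩ := hA.exists_finrank_eq_forall_le_inner k
  obtain ⟨x, hx, hx', hx0⟩ := exists_mem_mem_ne_zero_of_finrank_lt_add (U := U) (W := U')
    (by rw [finrank_euclideanSpace_fin]; omega)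
  exact le_of_mul_le_mul_right ((hU'A x hx').trans (hm x hx)) (pow_pos (norm_pos_iff.2 hx0) 2)

end Matrix.IsHermitian

namespace Matrix.PosSemidef

variable {n : ℕ} {A : Matrix (Fin n) (Fin n) ℝ} (hA : A.PosSemidef)
  (S : Matrix (Fin n) (Fin n) ℝ)
include hA

theorem sortedEigenvalues_nonneg (k : Fin n) : 0 ≤ sortedEigenvalues A k := by
  rw [hA.isHermitian.sortedEigenvalues_eq]
  exact hA.eigenvalues_nonneg _

theorem mul_sortedEigenvalues_le_sortedEigenvalues_conjTranspose_mul_mul {c : ℝ}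
    (hc : ∀ x, c * ‖x‖ ^ 2 ≤ ‖toEuclideanLin S x‖ ^ 2) (k : Fin n) :
    c * sortedEigenvalues A k ≤ sortedEigenvalues (Sᴴ * A * S) k := by
  obtain ⟨U, hU, hUA⟩ := hA.isHermitian.exists_finrank_eq_forall_le_inner k
  refine (hA.conjTranspose_mul_mul_same S).isHermitian.le_sortedEigenvalues_of_forall_le_inner k
    (hU.ge.trans (U.finrank_le_finrank_comap (toEuclideanLin S))) fun x hx => ?_
  rw [inner_toEuclideanLin_conjTranspose_mul_mul]
  calc c * sortedEigenvalues A k * ‖x‖ ^ 2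
      = sortedEigenvalues A k * (c * ‖x‖ ^ 2) := by ring
    _ ≤ sortedEigenvalues A k * ‖toEuclideanLin S x‖ ^ 2 :=
      mul_le_mul_of_nonneg_left (hc x) (hA.sortedEigenvalues_nonneg k)
    _ ≤ _ := hUA _ hx

theorem sortedEigenvalues_conjTranspose_mul_mul_le_mul {C : ℝ}
    (hC : ∀ x, ‖toEuclideanLin S x‖ ^ 2 ≤ C * ‖x‖ ^ 2) (k : Fin n) :
    sortedEigenvalues (Sᴴ * A * S) k ≤ C * sortedEigenvalues A k := by
  obtain ⟨U, hU, hUA⟩ := hA.isHermitian.exists_finrank_eq_forall_inner_le k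
  refine (hA.conjTranspose_mul_mul_same S).isHermitian.sortedEigenvalues_le_of_forall_inner_le k
    (hU.ge.trans (U.finrank_le_finrank_comap (toEuclideanLin S))) fun x hx => ?_
  rw [inner_toEuclideanLin_conjTranspose_mul_mul]
  calc _ ≤ sortedEigenvalues A k * ‖toEuclideanLin S x‖ ^ 2 := hUA _ hx
    _ ≤ sortedEigenvalues A k * (C * ‖x‖ ^ 2) :=
      mul_le_mul_of_nonneg_left (hC x) (hA.sortedEigenvalues_nonneg k)
    _ = C * sortedEigenvalues A k * ‖x‖ ^ 2 := by ring

end Matrix.PosSemidef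

namespace SimpleGraph

variable {n : ℕ} (G : SimpleGraph (Fin n))

noncomputable def sqrtDegMatrix : Matrix (Fin n) (Fin n) ℝ :=
  diagonal fun v => √(G.degree v)

theorem conjTranspose_sqrtDegMatrix : (sqrtDegMatrix G)ᴴ = sqrtDegMatrix G := by
  simp [sqrtDegMatrix]

theorem norm_sq_toEuclideanLin_sqrtDegMatrix (x : EuclideanSpace ℝ (Fin n)) :
    ‖toEuclideanLin (sqrtDegMatrix G) x‖ ^ 2 = ∑ v, G.degree v * x v ^ 2 := by
  simp [EuclideanSpace.norm_sq_eq, sqrtDegMatrix, mulVec_diagonal, mul_pow]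

theorem minDegree_mul_norm_sq_le (x : EuclideanSpace ℝ (Fin n)) :
    G.minDegree * ‖x‖ ^ 2 ≤ ‖toEuclideanLin (sqrtDegMatrix G) x‖ ^ 2 := by
  rw [norm_sq_toEuclideanLin_sqrtDegMatrix, EuclideanSpace.norm_sq_eq, Finset.mul_sum]
  simp only [Real.norm_eq_abs, sq_abs]
  gcongr with v
  exact_mod_cast G.minDegree_le_degree v

theorem norm_sq_le_maxDegree_mul (x : EuclideanSpace ℝ (Fin n)) :
    ‖toEuclideanLin (sqrtDegMatrix G) x‖ ^ 2 ≤ G.maxDegree * ‖x‖ ^ 2 := by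
  rw [norm_sq_toEuclideanLin_sqrtDegMatrix, EuclideanSpace.norm_sq_eq, Finset.mul_sum]
  simp only [Real.norm_eq_abs, sq_abs]
  gcongr with v
  exact_mod_cast G.degree_le_maxDegree v

variable {G} (hdeg : ∀ v, 0 < G.degree v)
include hdeg

theorem sqrtDegMatrix_mul_diagonal_inv :
    sqrtDegMatrix G * diagonal (fun v => (√(G.degree v))⁻¹) = 1 := by
  rw [sqrtDegMatrix, diagonal_mul_diagonal, ← diagonal_one]
  exact congrArg diagonal (funext fun v => mul_inv_cancel₀ (by positivity [hdeg v]))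

theorem diagonal_inv_mul_sqrtDegMatrix :
    diagonal (fun v => (√(G.degree v))⁻¹) * sqrtDegMatrix G = 1 := by
  rw [sqrtDegMatrix, diagonal_mul_diagonal, ← diagonal_one]
  exact congrArg diagonal (funext fun v => inv_mul_cancel₀ (by positivity [hdeg v]))

theorem lapMatrix_eq_sqrtDegMatrix_mul_normLapMatrix_mul :
    G.lapMatrix ℝ = sqrtDegMatrix G * normLapMatrix G * sqrtDegMatrix G := by
  have hsq : sqrtDegMatrix G * sqrtDegMatrix G = G.degMatrix ℝ := by
    rw [sqrtDegMatrix, diagonal_mul_diagonal, degMatrix]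
    exact congrArg diagonal (funext fun v => Real.mul_self_sqrt (Nat.cast_nonneg _))
  simp only [normLapMatrix, Matrix.mul_sub, Matrix.sub_mul, Matrix.mul_one, ← Matrix.mul_assoc,
    sqrtDegMatrix_mul_diagonal_inv hdeg, Matrix.one_mul]
  rw [Matrix.mul_assoc, diagonal_inv_mul_sqrtDegMatrix hdeg, Matrix.mul_one, hsq, lapMatrix]

theorem posSemidef_normLapMatrix : (normLapMatrix G).PosSemidef := by
  have h := (posSemidef_lapMatrix ℝ G).conjTranspose_mul_mul_same
    (diagonal fun v => (√(G.degree v))⁻¹)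
  rwa [diagonal_conjTranspose, star_trivial, lapMatrix_eq_sqrtDegMatrix_mul_normLapMatrix_mul hdeg,
    ← Matrix.mul_assoc, ← Matrix.mul_assoc, diagonal_inv_mul_sqrtDegMatrix hdeg, Matrix.one_mul,
    Matrix.mul_assoc, sqrtDegMatrix_mul_diagonal_inv hdeg, Matrix.mul_one] at h

end SimpleGraph

theorem laplacian_normalized_laplacian_degree_bounds {V : ℕ} (hV : 2 ≤ V)
    (G : SimpleGraph (Fin V)) (hG : G.Connected) (k : Fin V) :
    sortedEigenvalues (normLapMatrix G) k * (G.maxDegree : ℝ) ≥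
      sortedEigenvalues (G.lapMatrix ℝ) k ∧
    sortedEigenvalues (G.lapMatrix ℝ) k ≥
      sortedEigenvalues (normLapMatrix G) k * (G.minDegree : ℝ) := by
  have : Nontrivial (Fin V) := Fin.nontrivial_iff_two_le.2 hV
  have hdeg : ∀ v, 0 < G.degree v := fun v => hG.preconnected.degree_pos_of_nontrivial v
  have hL : G.lapMatrix ℝ = (G.sqrtDegMatrix)ᴴ * normLapMatrix G * G.sqrtDegMatrix := by
    rw [G.conjTranspose_sqrtDegMatrix, G.lapMatrix_eq_sqrtDegMatrix_mul_normLapMatrix_mul hdeg]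
  have h𝓛 := G.posSemidef_normLapMatrix hdeg
  rw [hL, mul_comm _ (G.maxDegree : ℝ), mul_comm _ (G.minDegree : ℝ)]
  exact ⟨h𝓛.sortedEigenvalues_conjTranspose_mul_mul_le_mul _ G.norm_sq_le_maxDegree_mul k,
    h𝓛.mul_sortedEigenvalues_le_sortedEigenvalues_conjTranspose_mul_mul _
      G.minDegree_mul_norm_sq_le k⟩
end
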